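/- Assume S ≥ 2 and L > 0 are such that |Φ_n(x)| ≤ L / max(1, (n|x|)^S) for all x ∈ 𝕋 and n ≥ 1. Set m = min_{1≤k≤K} |A_k|, η = min_{k≠ℓ} |λ_k − λ_ℓ|, and C = max(1, (16ML/m)^{1/S}). Let n be an integer with n ≥ 4C/η, and assume max_{y∈𝕋} |E_n(y)| ≤ m/16. Then for each ℓ ∈ {1,…,K} and every x ∈ 𝕋 with |x − λ_ℓ| ≤ 1/(4n), one has |σ_n(x)| ≥ (5/8) m. -/

import Mathlib

open MeasureTheory ProbabilityTheory

noncomputable section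

/-- A low pass filter: an infinitely differentiable even function `H : ℝ → [0,1]`
with `H(t) = 1` for `|t| ≤ 1/2` and `H(t) = 0` for `|t| ≥ 1`. -/
structure LowPassFilter where
  toFun : ℝ → ℝ
  contDiff : ContDiff ℝ (⊤ : ℕ∞) toFun
  mem_Icc : ∀ t : ℝ, toFun t ∈ Set.Icc (0 : ℝ) 1
  even : ∀ t : ℝ, toFun (-t) = toFun t
  eq_one : ∀ t : ℝ, |t| ≤ 1 / 2 → toFun t = 1
  eq_zero : ∀ t : ℝ, 1 ≤ |t| → toFun t = 0

/-- The integers `ℓ` with `|ℓ| < n`. -/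
def lrange (n : ℕ) : Finset ℤ := Finset.Ioo (-(n : ℤ)) (n : ℤ)

/-- The normalizing constant `ħ_n = (Σ_{|ℓ|<n} H(|ℓ|/n))⁻¹`. -/
def hbar (F : LowPassFilter) (n : ℕ) : ℝ :=
  (∑ ℓ ∈ lrange n, F.toFun (|(ℓ : ℝ)| / n))⁻¹

/-- The localized kernel `Φ_n(x) = ħ_n Σ_{|ℓ|<n} H(|ℓ|/n) e^{iℓx}`, as a function on `ℝ`
(it is `2π`-periodic, hence a function on `𝕋 = ℝ/2πℤ`). -/
def Phi (F : LowPassFilter) (n : ℕ) (x : ℝ) : ℂ :=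
  (hbar F n : ℂ) *
    ∑ ℓ ∈ lrange n, (F.toFun (|(ℓ : ℝ)| / n) : ℂ) * Complex.exp (Complex.I * ℓ * x)

/-- The distance from `x` to `0` modulo `2π`, i.e. the norm of `x` in `𝕋 = ℝ/2πℤ`. -/
def tnorm (x : ℝ) : ℝ := ‖(x : AddCircle (2 * Real.pi))‖

/-- A real-valued random variable `X` is mean-zero sub-Gaussian with parameter `V`
(`X ∈ G(V)`) if `E[X] = 0` and `log E[exp(tX)] ≤ t²V²/2` for all real `t`. -/
def SubGaussianRe {Ω : Type*} [MeasurableSpace Ω] (μ : Measure Ω) (X : Ω → ℝ) (V : ℝ) : Prop :=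
  (∫ ω, X ω ∂μ) = 0 ∧
    ∀ t : ℝ, Integrable (fun ω => Real.exp (t * X ω)) μ ∧
      Real.log (∫ ω, Real.exp (t * X ω) ∂μ) ≤ t ^ 2 * V ^ 2 / 2

/-- A complex-valued random variable is in `G(V)` if both its real and imaginary parts are
mean-zero sub-Gaussian with parameter `V`. -/
def SubGaussianC {Ω : Type*} [MeasurableSpace Ω] (μ : Measure Ω) (X : Ω → ℂ) (V : ℝ) : Prop :=
  SubGaussianRe μ (fun ω => (X ω).re) V ∧ SubGaussianRe μ (fun ω => (X ω).im) V

/-- The exact samples `μ̂(ℓ) = Σ_k A_k e^{-iℓλ_k}`. -/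
def muhat {K : ℕ} (A : Fin K → ℂ) (lam : Fin K → ℝ) (ℓ : ℤ) : ℂ :=
  ∑ k, A k * Complex.exp (-(Complex.I * ℓ * lam k))

/-- The noise term `E_n(x) = ħ_n Σ_{|ℓ|<n} H(|ℓ|/n) ε_ℓ e^{iℓx}`. -/
def En (F : LowPassFilter) (n : ℕ) (eps : ℤ → ℂ) (x : ℝ) : ℂ :=
  (hbar F n : ℂ) *
    ∑ ℓ ∈ lrange n, (F.toFun (|(ℓ : ℝ)| / n) : ℂ) * eps ℓ * Complex.exp (Complex.I * ℓ * x)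

/-- The reconstruction `σ_n(x) = ħ_n Σ_{|ℓ|<n} H(|ℓ|/n) (μ̂(ℓ) + ε_ℓ) e^{iℓx}`. -/
def sigman (F : LowPassFilter) (n : ℕ) {K : ℕ} (A : Fin K → ℂ) (lam : Fin K → ℝ)
    (eps : ℤ → ℂ) (x : ℝ) : ℂ :=
  (hbar F n : ℂ) *
    ∑ ℓ ∈ lrange n, (F.toFun (|(ℓ : ℝ)| / n) : ℂ) * (muhat A lam ℓ + eps ℓ) *
      Complex.exp (Complex.I * ℓ * x)


/-- The thresholded set `𝔾 = {x : |σ_n(x)| ≥ m/2}` (as a set of real representatives). -/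
def Gset (F : LowPassFilter) (n : ℕ) {K : ℕ} (A : Fin K → ℂ) (lam : Fin K → ℝ) (eps : ℤ → ℂ)
    (m : ℝ) : Set ℝ :=
  {x : ℝ | m / 2 ≤ ‖sigman F n A lam eps x‖}

/-- The cluster `𝔾_ℓ = {x ∈ 𝔾 : |x - λ_ℓ| < C/n}` (distance measured modulo `2π`). -/
def Glset (F : LowPassFilter) (n : ℕ) {K : ℕ} (A : Fin K → ℂ) (lam : Fin K → ℝ) (eps : ℤ → ℂ)
    (m C : ℝ) (l : Fin K) : Set ℝ :=
  {x ∈ Gset F n A lam eps m | tnorm (x - lam l) < C / n}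

-- helper lemmas
lemma tnorm_nonneg' (x : ℝ) : 0 ≤ tnorm x := norm_nonneg _

lemma tnorm_neg' (x : ℝ) : tnorm (-x) = tnorm x := by
  unfold tnorm; rw [AddCircle.coe_neg, norm_neg]

lemma tnorm_triangle' (a b : ℝ) : tnorm (a + b) ≤ tnorm a + tnorm b := by
  unfold tnorm; rw [AddCircle.coe_add]; exact norm_add_le _ _

lemma tnorm_rep (x : ℝ) : ∃ k : ℤ, |x - k * (2 * Real.pi)| = tnorm x :=
  ⟨round ((2 * Real.pi)⁻¹ * x), by rw [tnorm, AddCircle.norm_eq]⟩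

lemma sumH_pos (F : LowPassFilter) {n : ℕ} (hn : 1 ≤ n) :
    0 < ∑ ℓ ∈ lrange n, F.toFun (|(ℓ : ℝ)| / n) := by
  have h0 : (0 : ℤ) ∈ lrange n := by
    simp only [lrange, Finset.mem_Ioo]
    omega
  refine Finset.sum_pos' (fun i _ => (F.mem_Icc _).1) ⟨0, h0, ?_⟩
  have h1 : F.toFun (|((0 : ℤ) : ℝ)| / n) = 1 := by
    apply F.eq_one
    norm_num
  rw [h1]; norm_num

lemma hbar_mul_sum (F : LowPassFilter) {n : ℕ} (hn : 1 ≤ n) :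
    hbar F n * ∑ ℓ ∈ lrange n, F.toFun (|(ℓ : ℝ)| / n) = 1 :=
  inv_mul_cancel₀ (ne_of_gt (sumH_pos F hn))

lemma Phi_re (F : LowPassFilter) (n : ℕ) (y : ℝ) :
    (Phi F n y).re = hbar F n * ∑ ℓ ∈ lrange n, F.toFun (|(ℓ : ℝ)| / n) * Real.cos (ℓ * y) := by
  unfold Phi
  have h : ∀ ℓ : ℤ, Complex.I * (ℓ : ℂ) * (y : ℂ) = (((ℓ : ℝ) * y : ℝ) : ℂ) * Complex.I := by
    intro ℓ; push_cast; ring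
  simp_rw [h]
  simp only [Complex.mul_re, Complex.ofReal_re, Complex.ofReal_im, zero_mul, sub_zero,
    Complex.re_sum, Complex.exp_ofReal_mul_I_re]

lemma Phi_re_ge (F : LowPassFilter) {n : ℕ} (hn : 1 ≤ n) {y : ℝ}
    (hy : tnorm y ≤ 1 / (4 * n)) : 31 / 32 ≤ (Phi F n y).re := by
  obtain ⟨k, hk⟩ := tnorm_rep y
  set y' := y - k * (2 * Real.pi) with hy'
  have hcos : ∀ ℓ : ℤ, Real.cos ((ℓ : ℝ) * y) = Real.cos ((ℓ : ℝ) * y') := by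
    intro ℓ
    have h : (ℓ : ℝ) * y = (ℓ : ℝ) * y' + (ℓ * k : ℤ) * (2 * Real.pi) := by push_cast; ring
    rw [h, Real.cos_add_int_mul_two_pi]
  have hn0 : (0 : ℝ) < n := by exact_mod_cast hn
  have hy'le : |y'| ≤ 1 / (4 * n) := by rw [hk]; exact hy
  have hbound : ∀ ℓ ∈ lrange n, 31 / 32 * F.toFun (|(ℓ : ℝ)| / n)
      ≤ F.toFun (|(ℓ : ℝ)| / n) * Real.cos ((ℓ : ℝ) * y) := by
    intro ℓ hℓ
    rw [hcos]
    have hℓn : |(ℓ : ℝ)| ≤ n := by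
      simp only [lrange, Finset.mem_Ioo] at hℓ
      have hint : |ℓ| ≤ (n : ℤ) := by rw [abs_le]; omega
      exact_mod_cast hint
    have h1 : |(ℓ : ℝ) * y'| ≤ 1 / 4 := by
      rw [abs_mul]
      calc |(ℓ : ℝ)| * |y'| ≤ n * (1 / (4 * n)) :=
            mul_le_mul hℓn hy'le (abs_nonneg _) (le_of_lt hn0)
        _ = 1 / 4 := by field_simp; try ring
    have hc : 31 / 32 ≤ Real.cos ((ℓ : ℝ) * y') := by
      have h2 := Real.one_sub_sq_div_two_le_cos (x := (ℓ : ℝ) * y')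
      have hsq : ((ℓ : ℝ) * y') ^ 2 ≤ 1 / 16 := by
        rw [← sq_abs]
        nlinarith [abs_nonneg ((ℓ : ℝ) * y')]
      linarith
    nlinarith [(F.mem_Icc (|(ℓ : ℝ)| / n)).1]
  have hsum := sumH_pos F hn
  calc (31 : ℝ) / 32 = hbar F n * ∑ ℓ ∈ lrange n, 31 / 32 * F.toFun (|(ℓ : ℝ)| / n) := by
        rw [← Finset.mul_sum, show ∀ S : ℝ, hbar F n * (31 / 32 * S) = 31/32 * (hbar F n * S)
          from fun S => by ring, hbar_mul_sum F hn, mul_one]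
    _ ≤ (Phi F n y).re := by
        rw [Phi_re]
        exact mul_le_mul_of_nonneg_left (Finset.sum_le_sum hbound)
          (le_of_lt (inv_pos.2 hsum))

lemma sigman_eq (F : LowPassFilter) (n : ℕ) {K : ℕ} (A : Fin K → ℂ) (lam : Fin K → ℝ)
    (eps : ℤ → ℂ) (x : ℝ) :
    sigman F n A lam eps x = (∑ k, A k * Phi F n (x - lam k)) + En F n eps x := by
  unfold sigman En Phi muhat
  have expand : ∀ ℓ ∈ lrange n,
      (F.toFun (|(ℓ : ℝ)| / n) : ℂ) * ((∑ k, A k * Complex.exp (-(Complex.I * ℓ * lam k))) + eps ℓ)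
        * Complex.exp (Complex.I * ℓ * x)
      = (∑ k, A k * ((F.toFun (|(ℓ : ℝ)| / n) : ℂ)
          * Complex.exp (Complex.I * ℓ * ((x - lam k : ℝ) : ℂ))))
        + (F.toFun (|(ℓ : ℝ)| / n) : ℂ) * eps ℓ * Complex.exp (Complex.I * ℓ * x) := by
    intro ℓ _
    rw [mul_add, add_mul]
    congr 1
    rw [mul_comm ((F.toFun (|(ℓ : ℝ)| / n) : ℂ)) _, Finset.sum_mul, Finset.sum_mul]
    refine Finset.sum_congr rfl fun k _ => ?_
    have hexp : Complex.exp (-(Complex.I * ℓ * lam k)) * Complex.exp (Complex.I * ℓ * x)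
        = Complex.exp (Complex.I * ℓ * ((x - lam k : ℝ) : ℂ)) := by
      rw [← Complex.exp_add]
      congr 1
      push_cast
      ring
    calc A k * Complex.exp (-(Complex.I * ℓ * lam k)) * (F.toFun (|(ℓ : ℝ)| / n) : ℂ)
          * Complex.exp (Complex.I * ℓ * x)
        = A k * ((F.toFun (|(ℓ : ℝ)| / n) : ℂ)
            * (Complex.exp (-(Complex.I * ℓ * lam k)) * Complex.exp (Complex.I * ℓ * x))) := by
          ring
      _ = _ := by rw [hexp]
  rw [Finset.sum_congr rfl expand, Finset.sum_add_distrib, mul_add]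
  congr 1
  rw [Finset.sum_comm, Finset.mul_sum]
  refine Finset.sum_congr rfl fun k _ => ?_
  rw [← Finset.mul_sum, Finset.mul_sum, ← Finset.mul_sum]
  ring

/-- If `|x - λ_ℓ| ≤ 1/(4n)` for some `ℓ`, then `|σ_n(x)| ≥ (5/8) m`. -/
theorem sigma_large_near_points (F : LowPassFilter) (S L : ℝ) (hS : 2 ≤ S) (hL : 0 < L)
    (hloc : ∀ ν : ℕ, 1 ≤ ν → ∀ y : ℝ,
      ‖Phi F ν y‖ ≤ L / max 1 (((ν : ℝ) * tnorm y) ^ S))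
    (K : ℕ) (hK : 1 ≤ K) (lam : Fin K → ℝ) (A : Fin K → ℂ)
    (hsep : ∀ k l : Fin K, k ≠ l → tnorm (lam k - lam l) ≠ 0) (hA : ∀ k, A k ≠ 0)
    (M : ℝ) (hM : M = ∑ k, ‖A k‖)
    (m : ℝ) (hm : m = ⨅ k : Fin K, ‖A k‖)
    (η : ℝ) (hη : η = ⨅ p : { p : Fin K × Fin K // p.1 ≠ p.2 }, tnorm (lam p.1.1 - lam p.1.2))
    (C : ℝ) (hC : C = max 1 ((16 * M * L / m) ^ (1 / S)))
    (n : ℕ) (hn : 1 ≤ n) (hn4 : 4 * C / η ≤ (n : ℝ)) (eps : ℤ → ℂ)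
    (hE : ∀ y : ℝ, ‖En F n eps y‖ ≤ m / 16)
    (l : Fin K) (x : ℝ) (hx : tnorm (x - lam l) ≤ 1 / (4 * n)) :
    5 / 8 * m ≤ ‖sigman F n A lam eps x‖ := by
  classical
  have hK' : Nonempty (Fin K) := ⟨⟨0, hK⟩⟩
  have hbdd : BddBelow (Set.range fun k => ‖A k‖) := by
    refine ⟨0, ?_⟩; rintro _ ⟨j, rfl⟩; positivity
  have hm_le : ∀ k, m ≤ ‖A k‖ := fun k => hm ▸ ciInf_le hbdd k
  have hm_pos : 0 < m := by
    obtain ⟨k₀, hk₀⟩ := Finite.exists_min (fun k => ‖A k‖)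
    have h0 : 0 < ‖A k₀‖ := norm_pos_iff.2 (hA k₀)
    rw [hm]
    exact lt_of_lt_of_le h0 (le_ciInf hk₀)
  have hM_ge : ∀ k, ‖A k‖ ≤ M := by
    intro k
    rw [hM]
    exact Finset.single_le_sum (f := fun j => ‖A j‖) (fun j _ => norm_nonneg _) (Finset.mem_univ k)
  have hM_pos : 0 < M := lt_of_lt_of_le hm_pos (le_trans (hm_le l) (hM_ge l))
  have hC1 : (1 : ℝ) ≤ C := hC ▸ le_max_left _ _
  have hCpos : 0 < C := lt_of_lt_of_le one_pos hC1
  have hSpos : (0 : ℝ) < S := by linarith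
  have hCS : 16 * M * L / m ≤ C ^ S := by
    have hbase : (0 : ℝ) ≤ 16 * M * L / m := by positivity
    have h1 : (16 * M * L / m) ^ (1 / S) ≤ C := hC ▸ le_max_right _ _
    calc 16 * M * L / m = ((16 * M * L / m) ^ (1 / S)) ^ S := by
          rw [← Real.rpow_mul hbase, one_div, inv_mul_cancel₀ (ne_of_gt hSpos), Real.rpow_one]
      _ ≤ C ^ S := Real.rpow_le_rpow (Real.rpow_nonneg hbase _) h1 (le_of_lt hSpos)
  have hn0 : (0 : ℝ) < n := by exact_mod_cast hn
  rw [sigman_eq]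
  -- main term
  have hPhil : 31 / 32 ≤ (Phi F n (x - lam l)).re := Phi_re_ge F hn hx
  have h1 : 31 / 32 * m ≤ ‖A l * Phi F n (x - lam l)‖ := by
    rw [norm_mul]
    have hre : 31 / 32 ≤ ‖Phi F n (x - lam l)‖ :=
      le_trans hPhil (Complex.re_le_norm _)
    have := hm_le l
    nlinarith [norm_nonneg (Phi F n (x - lam l))]
  -- other terms
  have h2 : ∀ k : Fin K, k ≠ l →
      ‖A k * Phi F n (x - lam k)‖ ≤ ‖A k‖ * (m / (16 * M)) := by
    intro k hk
    have hne : Nonempty {p : Fin K × Fin K // p.1 ≠ p.2} := ⟨⟨(k, l), hk⟩⟩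
    have hbdd2 : BddBelow (Set.range fun p : {p : Fin K × Fin K // p.1 ≠ p.2} =>
        tnorm (lam p.1.1 - lam p.1.2)) := by
      refine ⟨0, ?_⟩; rintro _ ⟨j, rfl⟩; exact tnorm_nonneg' _
    have hη_le : η ≤ tnorm (lam l - lam k) := by
      rw [hη]; exact ciInf_le hbdd2 ⟨(l, k), Ne.symm hk⟩
    have hη_pos : 0 < η := by
      obtain ⟨p₀, hp₀⟩ := Finite.exists_min
        (fun p : {p : Fin K × Fin K // p.1 ≠ p.2} => tnorm (lam p.1.1 - lam p.1.2))
      have h0 : 0 < tnorm (lam p₀.1.1 - lam p₀.1.2) :=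
        lt_of_le_of_ne (tnorm_nonneg' _) (Ne.symm (hsep _ _ p₀.2))
      rw [hη]
      exact lt_of_lt_of_le h0 (le_ciInf hp₀)
    have h4C : 4 * C ≤ n * η := by
      rw [div_le_iff₀ hη_pos] at hn4; linarith
    have htri := tnorm_triangle' (lam l - x) (x - lam k)
    rw [show lam l - x + (x - lam k) = lam l - lam k by ring] at htri
    have hnegl : tnorm (lam l - x) = tnorm (x - lam l) := by
      rw [show lam l - x = -(x - lam l) by ring, tnorm_neg']
    have hdist : η - 1 / (4 * n) ≤ tnorm (x - lam k) := by
      rw [hnegl] at htri; linarith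
    have hnt : C ≤ (n : ℝ) * tnorm (x - lam k) := by
      have hmul : (n : ℝ) * (η - 1 / (4 * n)) ≤ n * tnorm (x - lam k) :=
        mul_le_mul_of_nonneg_left hdist (le_of_lt hn0)
      have hexp : (n : ℝ) * (η - 1 / (4 * n)) = n * η - 1 / 4 := by field_simp
      nlinarith
    have hntS : 16 * M * L / m ≤ ((n : ℝ) * tnorm (x - lam k)) ^ S :=
      le_trans hCS (Real.rpow_le_rpow (le_of_lt hCpos) hnt (le_of_lt hSpos))
    have hPhik := hloc n hn (x - lam k)
    have hX : (0 : ℝ) < 16 * M * L / m := by positivity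
    have hmaxge : 16 * M * L / m ≤ max 1 (((n : ℝ) * tnorm (x - lam k)) ^ S) :=
      le_trans hntS (le_max_right _ _)
    have habs : ‖Phi F n (x - lam k)‖ ≤ m / (16 * M) := by
      calc ‖Phi F n (x - lam k)‖ ≤ L / max 1 (((n : ℝ) * tnorm (x - lam k)) ^ S) :=
            hPhik
        _ ≤ L / (16 * M * L / m) := div_le_div_of_nonneg_left (le_of_lt hL) hX hmaxge
        _ = m / (16 * M) := by
            field_simp
    rw [norm_mul]
    exact mul_le_mul_of_nonneg_left habs (norm_nonneg _)
  -- combine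
  have hEn := hE x
  set T := ∑ k, A k * Phi F n (x - lam k) with hT
  set Srest := ∑ k ∈ Finset.univ.erase l, A k * Phi F n (x - lam k) with hS
  have hsplit : T = A l * Phi F n (x - lam l) + Srest :=
    (Finset.add_sum_erase _ _ (Finset.mem_univ l)).symm
  have herase : ‖Srest‖ ≤ m / 16 := by
    calc ‖Srest‖
        ≤ ∑ k ∈ Finset.univ.erase l, ‖A k * Phi F n (x - lam k)‖ :=
          norm_sum_le _ _
      _ ≤ ∑ k ∈ Finset.univ.erase l, ‖A k‖ * (m / (16 * M)) :=
          Finset.sum_le_sum fun k hk => h2 k (Finset.ne_of_mem_erase hk)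
      _ = (∑ k ∈ Finset.univ.erase l, ‖A k‖) * (m / (16 * M)) :=
          (Finset.sum_mul _ _ _).symm
      _ ≤ M * (m / (16 * M)) := by
          refine mul_le_mul_of_nonneg_right ?_ (by positivity)
          rw [hM]
          exact Finset.sum_le_sum_of_subset_of_nonneg (Finset.erase_subset _ _)
            (fun j _ _ => norm_nonneg _)
      _ = m / 16 := by field_simp
  have hrev : ‖A l * Phi F n (x - lam l)‖ - ‖Srest‖ ≤ ‖T‖ := by
    rw [hsplit]
    have := norm_sub_norm_le (A l * Phi F n (x - lam l)) (-Srest)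
    simp only [sub_neg_eq_add, norm_neg] at this
    simpa using this
  have hrev2 : ‖T‖ - ‖En F n eps x‖ ≤ ‖T + En F n eps x‖ := by
    have := norm_sub_norm_le T (-(En F n eps x))
    simp only [sub_neg_eq_add, norm_neg] at this
    simpa using this
  linarith

end
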